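/- For every (x,y) ∈ ℝ² with (x,y) ≠ (0,0), one has ⟨∇W(x,y), f(x,y)⟩ < 0. Together with W(0,0) = 0, W(x,y) > 0 for (x,y) ≠ (0,0), and radial unboundedness of W, this shows that W is a global Lyapunov function for the vector field f. -/

import Mathlib

/-!
Away from the origin `∇W = (a, b) / (x²+y²)²`. Hence `f₀`, which is `(a, b)` turned by a right
angle, is tangent to the level sets of `W`, while `f₁ = -(x²+y²)·(a, b)` gives
`⟨∇W, f⟩ = -(a² + b²) / (x²+y²)`. This is negative because `(a, b)` never vanishes off the origin:
by Euler's identity `x a + y b = 2 (x²+y²) (x⁴+y⁴) > 0`. Radial unboundedness follows from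
`2 (x⁴+y⁴) ≥ (x²+y²)²`, i.e. `W ≥ (x²+y²)/2`.
-/

/-- `W(x,y) = (x⁴+y⁴)/(x²+y²)` for `(x,y) ≠ (0,0)`, and `W(0,0) = 0`. -/
noncomputable def W (p : ℝ × ℝ) : ℝ :=
  if p = 0 then 0 else (p.1 ^ 4 + p.2 ^ 4) / (p.1 ^ 2 + p.2 ^ 2)

def a (x y : ℝ) : ℝ := 2 * x * (x ^ 4 + 2 * x ^ 2 * y ^ 2 - y ^ 4)

def b (x y : ℝ) : ℝ := 2 * y * (-x ^ 4 + 2 * x ^ 2 * y ^ 2 + y ^ 4)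

def f0 (p : ℝ × ℝ) : ℝ × ℝ := (-b p.1 p.2, a p.1 p.2)

def f1 (p : ℝ × ℝ) : ℝ × ℝ :=
  (-(p.1 ^ 2 + p.2 ^ 2) * a p.1 p.2, -(p.1 ^ 2 + p.2 ^ 2) * b p.1 p.2)

def f (p : ℝ × ℝ) : ℝ × ℝ := f0 p + f1 p

open Filter

lemma fst_pow_add_snd_pow_pos {n : ℕ} (hn : Even n) {p : ℝ × ℝ} (hp : p ≠ 0) :
    0 < p.1 ^ n + p.2 ^ n := by
  rcases not_and_or.mp (mt Prod.ext_iff.mpr hp) with h | h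
  · exact add_pos_of_pos_of_nonneg (hn.pow_pos h) (hn.pow_nonneg _)
  · exact add_pos_of_nonneg_of_pos (hn.pow_nonneg _) (hn.pow_pos h)

lemma Prod.norm_sq_le {E F : Type*} [SeminormedAddCommGroup E] [SeminormedAddCommGroup F]
    (p : E × F) : ‖p‖ ^ 2 ≤ ‖p.1‖ ^ 2 + ‖p.2‖ ^ 2 := by
  rw [Prod.norm_def]
  rcases max_choice ‖p.1‖ ‖p.2‖ with h | h <;> rw [h]
  · exact le_add_of_nonneg_right (sq_nonneg _)
  · exact le_add_of_nonneg_left (sq_nonneg _)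

lemma mul_a_add_mul_b (x y : ℝ) :
    x * a x y + y * b x y = 2 * (x ^ 2 + y ^ 2) * (x ^ 4 + y ^ 4) := by
  simp only [a, b]
  ring

lemma a_sq_add_b_sq_pos {p : ℝ × ℝ} (hp : p ≠ 0) : 0 < a p.1 p.2 ^ 2 + b p.1 p.2 ^ 2 := by
  have hD := fst_pow_add_snd_pow_pos even_two hp
  have hEuler : 0 < p.1 * a p.1 p.2 + p.2 * b p.1 p.2 := by
    rw [mul_a_add_mul_b]
    have := fst_pow_add_snd_pow_pos (by decide : Even 4) hp
    positivity
  -- Lagrange's identity: `(x²+y²)(a²+b²) = (xa+yb)² + (xb-ya)²`.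
  refine pos_of_mul_pos_right (a := p.1 ^ 2 + p.2 ^ 2) ?_ hD.le
  nlinarith [sq_nonneg (p.1 * b p.1 p.2 - p.2 * a p.1 p.2), pow_pos hEuler 2]

lemma hasFDerivAt_W {p : ℝ × ℝ} (hp : p ≠ 0) :
    HasFDerivAt W (((p.1 ^ 2 + p.2 ^ 2) ^ 2)⁻¹ • (a p.1 p.2 • ContinuousLinearMap.fst ℝ ℝ ℝ +
      b p.1 p.2 • ContinuousLinearMap.snd ℝ ℝ ℝ)) p := by
  have hD : p.1 ^ 2 + p.2 ^ 2 ≠ 0 := (fst_pow_add_snd_pow_pos even_two hp).ne'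
  have hx := hasFDerivAt_fst (𝕜 := ℝ) (p := p)
  have hy := hasFDerivAt_snd (𝕜 := ℝ) (p := p)
  have hN := (hx.pow 4).add (hy.pow 4)
  have hDen := (hx.pow 2).add (hy.pow 2)
  have hquot := hN.fun_mul ((hasDerivAt_inv hD).comp_hasFDerivAt p hDen)
  refine (hquot.congr_of_eventuallyEq ?_).congr_fderiv ?_
  · filter_upwards [isOpen_ne.mem_nhds hp] with q hq
    simp only [W, hq, ↓reduceIte, div_eq_mul_inv, Pi.add_apply, Function.comp_apply]
  · refine ContinuousLinearMap.ext fun v => ?_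
    simp only [Pi.add_apply, Nat.add_one_sub_one, pow_one, nsmul_eq_mul, Nat.cast_ofNat, smul_add,
      neg_smul, smul_neg, Function.comp_apply, add_apply, neg_apply, smul_apply,
      ContinuousLinearMap.coe_fst', smul_eq_mul, ContinuousLinearMap.coe_snd', a, b]
    field_simp
    ring

lemma fderiv_W_apply_f {p : ℝ × ℝ} (hp : p ≠ 0) :
    fderiv ℝ W p (f p) = -(a p.1 p.2 ^ 2 + b p.1 p.2 ^ 2) / (p.1 ^ 2 + p.2 ^ 2) := by
  have hD : p.1 ^ 2 + p.2 ^ 2 ≠ 0 := (fst_pow_add_snd_pow_pos even_two hp).ne'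
  rw [(hasFDerivAt_W hp).fderiv]
  simp only [smul_add, f, f0, f1, neg_add_rev, Prod.mk_add_mk, add_apply, smul_apply,
    ContinuousLinearMap.coe_fst', smul_eq_mul, ContinuousLinearMap.coe_snd']
  field_simp
  ring

lemma W_pos {p : ℝ × ℝ} (hp : p ≠ 0) : 0 < W p := by
  rw [W, if_neg hp]
  exact div_pos (fst_pow_add_snd_pow_pos (by decide) hp) (fst_pow_add_snd_pow_pos even_two hp)

lemma norm_sq_div_two_le_W (p : ℝ × ℝ) : ‖p‖ ^ 2 / 2 ≤ W p := by
  by_cases hp : p = 0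
  · simp [hp, W]
  have hD := fst_pow_add_snd_pow_pos even_two hp
  have hnorm : ‖p‖ ^ 2 ≤ p.1 ^ 2 + p.2 ^ 2 := by
    simpa only [Real.norm_eq_abs, sq_abs] using p.norm_sq_le
  rw [W, if_neg hp, le_div_iff₀ hD]
  nlinarith [sq_nonneg (p.1 ^ 2 - p.2 ^ 2), mul_le_mul_of_nonneg_right hnorm hD.le]

lemma tendsto_W_cocompact : Tendsto W (cocompact (ℝ × ℝ)) atTop :=
  tendsto_atTop_mono norm_sq_div_two_le_W <|
    ((tendsto_pow_atTop two_ne_zero).comp tendsto_norm_cocompact_atTop).atTop_div_const two_pos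

/-- `W` is a global Lyapunov function for `f`: it vanishes at the origin, is
positive away from the origin, is radially unbounded, and its derivative along
`f` is negative away from the origin. -/
theorem stmt6 :
    (∀ p : ℝ × ℝ, p ≠ 0 → fderiv ℝ W p (f p) < 0) ∧
    W 0 = 0 ∧
    (∀ p : ℝ × ℝ, p ≠ 0 → W p > 0) ∧
    Filter.Tendsto W (Filter.cocompact (ℝ × ℝ)) Filter.atTop := by
  refine ⟨fun p hp => ?_, if_pos rfl, fun p hp => W_pos hp, tendsto_W_cocompact⟩
  rw [fderiv_W_apply_f hp]
  exact div_neg_of_neg_of_pos (neg_neg_of_pos (a_sq_add_b_sq_pos hp))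
    (fst_pow_add_snd_pow_pos even_two hp)
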